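/- arXiv:1703.03826 — 3 statements merged into one kernel-verified Lean document; each statement's English description precedes it below -/
import Mathlib

section
/- Let G be an algebraic group over an infinite field F. The set RG(F) of R-trivial elements of G(F) is a normal subgroup of G(F). -/
/-- `x ∈ G(F)` (for a linear algebraic group `G ≤ GL_n`) is `R`-trivial if there is a rational
morphism `f : ℙ¹ ⇢ G`, defined at `0` and `1`, with `f(0) = 1` and `f(1) = x`; concretely, `f`
is given by a matrix of polynomials `p` divided by a denominator `q` not vanishing at `0` and
`1`, taking values in `G` wherever `q ≠ 0`. -/
def IsRTrivial {F : Type*} [Field F] {n : ℕ} (G : Subgroup (GL (Fin n) F))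
    (x : GL (Fin n) F) : Prop :=
  ∃ (p : Matrix (Fin n) (Fin n) (Polynomial F)) (q : Polynomial F),
    q.eval 0 ≠ 0 ∧ q.eval 1 ≠ 0 ∧
    (∀ t : F, q.eval t ≠ 0 → ∃ g ∈ G,
      (g : Matrix (Fin n) (Fin n) F) = (q.eval t)⁻¹ • p.map (Polynomial.eval t)) ∧
    (q.eval 0)⁻¹ • p.map (Polynomial.eval 0) = (1 : Matrix (Fin n) (Fin n) F) ∧
    (q.eval 1)⁻¹ • p.map (Polynomial.eval 1) = (x : Matrix (Fin n) (Fin n) F)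

section Helpers

open Matrix Polynomial

variable {F : Type*} [Field F] {n : ℕ}

/-- Key computation for inverses: if `a⁻¹ • P` is an invertible matrix `M`, then `P` has
nonzero determinant and `(a * det P)⁻¹ • (a ^ 2 • adjugate P) = M⁻¹`. -/
private lemma key_inv {a : F} (ha : a ≠ 0)
    {P M : Matrix (Fin n) (Fin n) F} (hM : a⁻¹ • P = M) (hMu : IsUnit M) :
    P.det ≠ 0 ∧ (a * P.det)⁻¹ • ((a ^ 2) • P.adjugate) = M⁻¹ := by
  have hP : P = a • M := by
    rw [← hM, smul_smul, mul_inv_cancel₀ ha, one_smul]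
  have hMdet : M.det ≠ 0 := ((Matrix.isUnit_iff_isUnit_det M).mp hMu).ne_zero
  have hPd : P.det ≠ 0 := by
    rw [hP, Matrix.det_smul]
    exact mul_ne_zero (pow_ne_zero _ ha) hMdet
  refine ⟨hPd, ?_⟩
  symm
  apply Matrix.inv_eq_left_inv
  rw [← hM, Matrix.smul_mul, Matrix.smul_mul, Matrix.mul_smul, Matrix.adjugate_mul,
    smul_smul, smul_smul, smul_smul]
  have h1 : (a * P.det)⁻¹ * a ^ 2 * a⁻¹ * P.det = 1 := by
    field_simp
  rw [h1, one_smul]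

private lemma map_mul_eval (p p' : Matrix (Fin n) (Fin n) (Polynomial F)) (t : F) :
    (p * p').map (Polynomial.eval t) = p.map (Polynomial.eval t) * p'.map (Polynomial.eval t) := by
  rw [← Polynomial.coe_evalRingHom, Matrix.map_mul]

private lemma map_smul_eval (c : Polynomial F) (M : Matrix (Fin n) (Fin n) (Polynomial F))
    (t : F) : (c • M).map (Polynomial.eval t) = c.eval t • M.map (Polynomial.eval t) := by
  ext i j
  simp [Matrix.map_apply]

private lemma my_eval_det (p : Matrix (Fin n) (Fin n) (Polynomial F)) (t : F) :
    (p.det).eval t = (p.map (Polynomial.eval t)).det := by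
  have := RingHom.map_det (Polynomial.evalRingHom t) p
  simpa [RingHom.mapMatrix_apply] using this

private lemma eval_adjugate (p : Matrix (Fin n) (Fin n) (Polynomial F)) (t : F) :
    (p.adjugate).map (Polynomial.eval t) = (p.map (Polynomial.eval t)).adjugate := by
  have := RingHom.map_adjugate (Polynomial.evalRingHom t) p
  simpa [RingHom.mapMatrix_apply] using this

private lemma map_C_eval (A : Matrix (Fin n) (Fin n) F) (t : F) :
    (A.map Polynomial.C).map (Polynomial.eval t) = A := by
  ext i j
  simp [Matrix.map_apply]

private lemma smul_mul_helper (a b : F) (M N : Matrix (Fin n) (Fin n) F) :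
    ((a * b)⁻¹ : F) • (M * N) = (a⁻¹ • M) * (b⁻¹ • N) := by
  rw [Matrix.smul_mul, Matrix.mul_smul, smul_smul, mul_inv]

private lemma rtrivial_mem {G : Subgroup (GL (Fin n) F)} {x : GL (Fin n) F}
    (hx : IsRTrivial G x) : x ∈ G := by
  obtain ⟨p, q, h0, h1, hmem, e0, e1⟩ := hx
  obtain ⟨g, hg, hge⟩ := hmem 1 h1
  have : g = x := Units.ext (by rw [hge, e1])
  exact this ▸ hg

private lemma rtrivial_one (G : Subgroup (GL (Fin n) F)) : IsRTrivial G 1 := by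
  refine ⟨1, 1, by simp, by simp, ?_, ?_, ?_⟩
  · intro t _
    refine ⟨1, G.one_mem, ?_⟩
    rw [Matrix.map_one (Polynomial.eval t) (by simp) (by simp)]
    simp [Units.val_one]
  · rw [Matrix.map_one (Polynomial.eval 0) (by simp) (by simp)]; simp
  · rw [Matrix.map_one (Polynomial.eval 1) (by simp) (by simp)]
    simp [Units.val_one]

private lemma rtrivial_mul {G : Subgroup (GL (Fin n) F)} {x y : GL (Fin n) F}
    (hx : IsRTrivial G x) (hy : IsRTrivial G y) : IsRTrivial G (x * y) := by
  obtain ⟨p, q, h0, h1, hmem, e0, e1⟩ := hx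
  obtain ⟨p', q', h0', h1', hmem', e0', e1'⟩ := hy
  refine ⟨p * p', q * q', by simp [h0, h0'], by simp [h1, h1'], ?_, ?_, ?_⟩
  · intro t ht
    rw [Polynomial.eval_mul] at ht
    have ht1 : q.eval t ≠ 0 := fun h => ht (by rw [h, zero_mul])
    have ht2 : q'.eval t ≠ 0 := fun h => ht (by rw [h, mul_zero])
    obtain ⟨g, hg, hge⟩ := hmem t ht1
    obtain ⟨g', hg', hge'⟩ := hmem' t ht2
    refine ⟨g * g', G.mul_mem hg hg', ?_⟩
    rw [Polynomial.eval_mul, map_mul_eval, smul_mul_helper, Units.val_mul, hge, hge']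
  · rw [Polynomial.eval_mul, map_mul_eval, smul_mul_helper, e0, e0', one_mul]
  · rw [Polynomial.eval_mul, map_mul_eval, smul_mul_helper, e1, e1', Units.val_mul]

private lemma rtrivial_inv {G : Subgroup (GL (Fin n) F)} {x : GL (Fin n) F}
    (hx : IsRTrivial G x) : IsRTrivial G x⁻¹ := by
  obtain ⟨p, q, h0, h1, hmem, e0, e1⟩ := hx
  have key : ∀ t : F, q.eval t ≠ 0 → ∀ M : Matrix (Fin n) (Fin n) F,
      (q.eval t)⁻¹ • p.map (Polynomial.eval t) = M → IsUnit M →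
      (q * p.det).eval t ≠ 0 ∧
      ((q * p.det).eval t)⁻¹ • ((q ^ 2 • p.adjugate).map (Polynomial.eval t)) = M⁻¹ := by
    intro t ht M hM hMu
    obtain ⟨hd, hv⟩ := key_inv ht hM hMu
    constructor
    · rw [Polynomial.eval_mul, my_eval_det]
      exact mul_ne_zero ht hd
    · rw [Polynomial.eval_mul, my_eval_det, map_smul_eval, eval_adjugate,
        Polynomial.eval_pow]
      exact hv
  refine ⟨q ^ 2 • p.adjugate, q * p.det, ?_, ?_, ?_, ?_, ?_⟩
  · exact (key 0 h0 1 e0 isUnit_one).1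
  · exact (key 1 h1 _ e1 x.isUnit).1
  · intro t ht
    have ht1 : q.eval t ≠ 0 := by
      rw [Polynomial.eval_mul] at ht
      exact fun h => ht (by rw [h, zero_mul])
    obtain ⟨g, hg, hge⟩ := hmem t ht1
    refine ⟨g⁻¹, G.inv_mem hg, ?_⟩
    rw [Matrix.coe_units_inv]
    exact ((key t ht1 _ hge.symm g.isUnit).2).symm
  · rw [(key 0 h0 1 e0 isUnit_one).2]
    exact Matrix.inv_eq_left_inv (mul_one 1)
  · rw [(key 1 h1 _ e1 x.isUnit).2, ← Matrix.coe_units_inv]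

private lemma rtrivial_conj {G : Subgroup (GL (Fin n) F)} {g x : GL (Fin n) F}
    (hg : g ∈ G) (hx : IsRTrivial G x) : IsRTrivial G (g * x * g⁻¹) := by
  obtain ⟨p, q, h0, h1, hmem, e0, e1⟩ := hx
  set A : Matrix (Fin n) (Fin n) (Polynomial F) := (g : Matrix (Fin n) (Fin n) F).map Polynomial.C
  set B : Matrix (Fin n) (Fin n) (Polynomial F) :=
    ((g⁻¹ : GL (Fin n) F) : Matrix (Fin n) (Fin n) F).map Polynomial.C
  have hval : ∀ t : F, (A * p * B).map (Polynomial.eval t) =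
      (g : Matrix (Fin n) (Fin n) F) * p.map (Polynomial.eval t) *
        ((g⁻¹ : GL (Fin n) F) : Matrix (Fin n) (Fin n) F) := by
    intro t
    rw [map_mul_eval, map_mul_eval, map_C_eval, map_C_eval]
  have hsmul : ∀ (a : F) (M : Matrix (Fin n) (Fin n) F),
      a • ((g : Matrix (Fin n) (Fin n) F) * M *
        ((g⁻¹ : GL (Fin n) F) : Matrix (Fin n) (Fin n) F)) =
      (g : Matrix (Fin n) (Fin n) F) * (a • M) *
        ((g⁻¹ : GL (Fin n) F) : Matrix (Fin n) (Fin n) F) := by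
    intro a M
    rw [Matrix.mul_smul, Matrix.smul_mul]
  refine ⟨A * p * B, q, h0, h1, ?_, ?_, ?_⟩
  · intro t ht
    obtain ⟨h, hh, hhe⟩ := hmem t ht
    refine ⟨g * h * g⁻¹, G.mul_mem (G.mul_mem hg hh) (G.inv_mem hg), ?_⟩
    rw [hval, hsmul, ← hhe, Units.val_mul, Units.val_mul]
  · rw [hval, hsmul, e0, mul_one, ← Units.val_mul, mul_inv_cancel, Units.val_one]
  · rw [hval, hsmul, e1, Units.val_mul, Units.val_mul]

end Helpers

/-- For a (linear) algebraic group `G` over an infinite field `F`, the set `RG(F)` of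
`R`-trivial elements of `G(F)` is a normal subgroup of `G(F)`. -/
theorem rtrivial_normal_subgroup (F : Type*) [Field F] [Infinite F] (n : ℕ)
    (G : Subgroup (GL (Fin n) F))
    (hG : ∃ S : Set (MvPolynomial (Fin n × Fin n) F), ∀ g : GL (Fin n) F,
      g ∈ G ↔ ∀ P ∈ S,
        MvPolynomial.eval (fun ij => (g : Matrix (Fin n) (Fin n) F) ij.1 ij.2) P = 0) :
    ∃ N : Subgroup (GL (Fin n) F),
      (N : Set (GL (Fin n) F)) = {x : GL (Fin n) F | IsRTrivial G x} ∧
      N ≤ G ∧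
      ∀ g ∈ G, ∀ x ∈ N, g * x * g⁻¹ ∈ N := by
  refine ⟨{ carrier := {x : GL (Fin n) F | IsRTrivial G x}
            one_mem' := rtrivial_one G
            mul_mem' := fun hx hy => rtrivial_mul hx hy
            inv_mem' := fun hx => rtrivial_inv hx }, rfl, ?_, ?_⟩
  · intro x hx
    exact rtrivial_mem hx
  · intro g hg x hx
    exact rtrivial_conj hg hx
end

section
/- Let (A, σ) be a central simple algebra of degree 4 with symplectic involution, I ⊆ A a right ideal of reduced dimension 2 with σ(I)·I = (0). Then the one-dimensional subspace I ∩ Symd(A, σ) is contained in Symd(A, σ)⁰ and is isotropic for the quadratic form s_σ(a) = a². -/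
/-- Let `(A, σ)` be a central simple algebra of degree 4 with symplectic involution and
`I ⊆ A` a right ideal of reduced dimension 2 (so `dim_F I = 8`) with `σ(I)·I = (0)`.  Then the
one-dimensional subspace `I ∩ Symd(A, σ)` is contained in `Symd(A, σ)⁰` and is isotropic for
the quadratic form `s_σ(a) = a²`. -/
theorem isotropic_ideal_meets_symd (F A : Type*) [Field F] [Ring A] [Algebra F A]
    [Algebra.IsCentral F A] [IsSimpleRing A] [FiniteDimensional F A]
    (hdeg : Module.finrank F A = 16)
    (σ : A →ₗ[F] A) (hanti : ∀ x y : A, σ (x * y) = σ y * σ x)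
    (hinv : ∀ a : A, σ (σ a) = a)
    (Symd : Submodule F A)
    (hSymd : (Symd : Set A) = {x : A | ∃ a : A, x = a + σ a})
    (Trp : A →ₗ[F] F) (Nrp : A → F)
    (hCH : ∀ a ∈ Symd, a ^ 2 - Trp a • a + algebraMap F A (Nrp a) = 0)
    (I : Submodule F A) (hright : ∀ x ∈ I, ∀ a : A, x * a ∈ I)
    (hrdim : Module.finrank F I = 8)
    (hiso : ∀ x ∈ I, ∀ y ∈ I, σ x * y = 0)
    (hmeet : Module.finrank F ↥(I ⊓ Symd) = 1) :
    ∀ x ∈ I, x ∈ Symd → Trp x = 0 ∧ x ^ 2 = 0 := by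
  intro x hxI hxS
  -- x is symmetric: σ x = x
  have hxmem : x ∈ {x : A | ∃ a : A, x = a + σ a} := by rw [← hSymd]; exact hxS
  obtain ⟨a, ha⟩ := hxmem
  have hσx : σ x = x := by rw [ha, map_add, hinv, add_comm]
  -- x² = 0
  have hsq : x ^ 2 = 0 := by
    have := hiso x hxI x hxI
    rw [hσx] at this
    rw [sq]; exact this
  refine ⟨?_, hsq⟩
  by_cases hx0 : x = 0
  · rw [hx0, map_zero]
  · have hch := hCH x hxS
    rw [hsq, zero_sub, neg_add_eq_zero] at hch
    -- algebraMap F A (Nrp x) = Trp x • x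
    have hmul : (Nrp x) • x = 0 := by
      have : algebraMap F A (Nrp x) * x = Trp x • x * x := by rw [hch]
      rw [← Algebra.smul_def, smul_mul_assoc, ← sq, hsq, smul_zero] at this
      exact this
    have hN : Nrp x = 0 := by
      rcases smul_eq_zero.mp hmul with h | h
      · exact h
      · exact absurd h hx0
    rw [hN, map_zero] at hch
    rcases smul_eq_zero.mp hch with h | h
    · exact h
    · exact absurd h hx0
end

section
/- Let q be a nondegenerate quadratic form on an F-vector space V and let Γ⁺(V, q) = {g ∈ C₀(V, q)ˣ | g·V·g⁻¹ = V} be the even Clifford group. Then the spinor norm Sn : Γ⁺(V, q) → Fˣ, defined by Sn(g) = g·τ(g) where τ is the canonical involution on the even Clifford algebra, is a group homomorphism. -/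
/-!
For `g` in the even Clifford group, `x = g τ(g)` is even and commutes with every vector: from
`v g = g w` one gets `τ(g) v = w τ(g)` by reversing. Hence for every `v` the twisted commutator
`v x - involute(x) v`, which is the contraction of `x` by the functional `polar q v`, vanishes.
By nondegeneracy every functional has this form, and an element of a Clifford algebra killed by
all contractions is a scalar: adjoining one basis vector `e` at a time, write `x = a + e b` with
`a, b` generated by the earlier basis vectors and contract with the coordinate of `e` to get
`b = 0`. Since `g τ(g)` is a unit it is a nonzero scalar, and multiplicativity is
`(g h) τ(g h) = g (h τ(h)) τ(g)`.
-/

theorem Algebra.toSubmodule_adjoin_le_of_mul_mem {R A : Type*} [CommSemiring R] [Semiring A]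
    [Algebra R A] {s : Set A} {p : Submodule R A} (one_mem : (1 : A) ∈ p)
    (mul_mem : ∀ x ∈ s, ∀ y ∈ p, x * y ∈ p) :
    Subalgebra.toSubmodule (Algebra.adjoin R s) ≤ p := by
  rw [Algebra.adjoin_eq_span, Submodule.span_le]
  intro y hy
  induction hy using Submonoid.closure_induction_left with
  | one => exact one_mem
  | mul_left x hx y _ hy => exact mul_mem x hx y hy

namespace CliffordAlgebra

section CommRing

variable {R M : Type*} [CommRing R] [AddCommGroup M] [Module R M] {Q : QuadraticForm R M}

theorem contractLeft_eq_zero_of_mem_adjoin {d : Module.Dual R M} {S : Set M}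
    (hd : ∀ v ∈ S, d v = 0) {y : CliffordAlgebra Q} (hy : y ∈ Algebra.adjoin R (ι Q '' S)) :
    contractLeft d y = 0 := by
  refine Algebra.toSubmodule_adjoin_le_of_mul_mem (p := LinearMap.ker (contractLeft d))
    (contractLeft_one Q d) ?_ hy
  rintro _ ⟨v, hv, rfl⟩ y hy
  rw [LinearMap.mem_ker] at hy ⊢
  rw [contractLeft_ι_mul, hd v hv, hy, zero_smul, mul_zero, sub_zero]

theorem exists_eq_add_ι_mul_of_mem_adjoin_insert {e : M} {S : Set M} {x : CliffordAlgebra Q}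
    (hx : x ∈ Algebra.adjoin R (ι Q '' insert e S)) :
    ∃ a ∈ Algebra.adjoin R (ι Q '' S), ∃ b ∈ Algebra.adjoin R (ι Q '' S),
      x = a + ι Q e * b := by
  set A := Algebra.adjoin R (ι Q '' S)
  let P : Submodule R (CliffordAlgebra Q) :=
    Subalgebra.toSubmodule A ⊔ (Subalgebra.toSubmodule A).map (LinearMap.mulLeft R (ι Q e))
  suffices Subalgebra.toSubmodule (Algebra.adjoin R (ι Q '' insert e S)) ≤ P by
    obtain ⟨a, ha, _, ⟨b, hb, rfl⟩, hab⟩ := Submodule.mem_sup.mp (this hx)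
    exact ⟨a, ha, b, hb, hab.symm⟩
  refine Algebra.toSubmodule_adjoin_le_of_mul_mem (Submodule.mem_sup_left A.one_mem) ?_
  rintro _ ⟨v, hv, rfl⟩ _ hy
  obtain ⟨a, ha, _, ⟨b, hb, rfl⟩, rfl⟩ := Submodule.mem_sup.mp hy
  rcases hv with rfl | hv
  · refine Submodule.mem_sup.mpr ⟨Q v • b, A.smul_mem hb _, ι Q v * a, ⟨a, ha, rfl⟩, ?_⟩
    simp only [LinearMap.mulLeft_apply, mul_add, ← mul_assoc, ι_sq_scalar, Algebra.smul_def]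
    abel
  · have hv : ι Q v ∈ A := Algebra.subset_adjoin ⟨v, hv, rfl⟩
    refine Submodule.mem_sup.mpr ⟨ι Q v * a + QuadraticMap.polar Q v e • b,
      add_mem (A.mul_mem hv ha) (A.smul_mem hb _), ι Q e * -(ι Q v * b),
      ⟨_, neg_mem (A.mul_mem hv hb), rfl⟩, ?_⟩
    have hswap : ι Q v * ι Q e = algebraMap R _ (QuadraticMap.polar Q v e) - ι Q e * ι Q v := by
      rw [← ι_mul_ι_add_swap, add_sub_cancel_right]
    simp only [LinearMap.mulLeft_apply, mul_add, ← mul_assoc, hswap, sub_mul, Algebra.smul_def,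
      mul_neg]
    abel

theorem mem_bot_of_mem_adjoin_of_forall_contractLeft_eq_zero {I : Type*}
    (b : Module.Basis I R M) (T : Finset I) {x : CliffordAlgebra Q}
    (hxT : x ∈ Algebra.adjoin R (ι Q '' (b '' T)))
    (hx : ∀ d : Module.Dual R M, contractLeft d x = 0) : x ∈ (⊥ : Subalgebra R _) := by
  classical
  induction T using Finset.induction_on generalizing x with
  | empty => simpa using hxT
  | insert i T hi ih =>
    rw [Finset.coe_insert, Set.image_insert_eq] at hxT
    obtain ⟨a, ha, c, hc, rfl⟩ := exists_eq_add_ι_mul_of_mem_adjoin_insert hxT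
    have hcoord : ∀ v ∈ b '' T, b.coord i v = 0 := by
      rintro _ ⟨j, hj, rfl⟩
      simp [show i ≠ j from fun h => hi (h ▸ hj)]
    have hc0 : c = 0 := by
      simpa [contractLeft_eq_zero_of_mem_adjoin hcoord ha, contractLeft_ι_mul,
        contractLeft_eq_zero_of_mem_adjoin hcoord hc] using hx (b.coord i)
    subst hc0
    rw [mul_zero, add_zero] at hx ⊢
    exact ih ha hx

theorem mem_bot_of_forall_contractLeft_eq_zero [Module.Free R M] [Module.Finite R M]
    {x : CliffordAlgebra Q} (hx : ∀ d : Module.Dual R M, contractLeft d x = 0) :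
    x ∈ (⊥ : Subalgebra R _) := by
  let b := Module.Free.chooseBasis R M
  refine mem_bot_of_mem_adjoin_of_forall_contractLeft_eq_zero b Finset.univ ?_ hx
  rw [Finset.coe_univ, Set.image_univ, ← Algebra.adjoin_span, ← Submodule.map_span,
    b.span_eq, Submodule.map_top, LinearMap.coe_range, adjoin_range_ι]
  exact Algebra.mem_top

theorem ι_mul_sub_involute_mul_ι (v : M) (y : CliffordAlgebra Q) :
    ι Q v * y - involute y * ι Q v = contractLeft (QuadraticMap.polarBilin Q v) y := by
  induction y using CliffordAlgebra.left_induction with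
  | algebraMap r => simp [Algebra.commutes]
  | add x y hx hy =>
    rw [map_add, map_add, mul_add, add_mul, ← hx, ← hy]
    abel
  | ι_mul x m hx =>
    rw [contractLeft_ι_mul, ← hx, QuadraticMap.polarBilin_apply_apply, Algebra.smul_def,
      ← ι_mul_ι_add_swap, map_mul, involute_ι]
    noncomm_ring

theorem nontrivial_of_free [Nontrivial R] [Module.Free R M] :
    Nontrivial (CliffordAlgebra Q) := by
  obtain ⟨B, hB⟩ := LinearMap.BilinMap.toQuadraticMap_surjective (R := R) (M := M) Q
  have h : (-B).toQuadraticMap = 0 - Q := by rw [zero_sub, ← hB]; rfl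
  have : Nontrivial (CliffordAlgebra (0 : QuadraticForm R M)) :=
    inferInstanceAs (Nontrivial (ExteriorAlgebra R M))
  exact (changeFormEquiv h).symm.injective.nontrivial

theorem reverse_mem_even_iff {x : CliffordAlgebra Q} : reverse x ∈ even Q ↔ x ∈ even Q := by
  simp only [← Subalgebra.mem_toSubmodule, even_toSubmodule, reverse_mem_evenOdd_iff]

theorem isUnit_mul_reverse (g : (CliffordAlgebra Q)ˣ) :
    IsUnit ((g : CliffordAlgebra Q) * reverse g) :=
  g.isUnit.mul ((g.isUnit.map (reverseOp (Q := Q))).unop)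

theorem commute_ι_mul_reverse {g : CliffordAlgebra Q} {v w : M} (h : ι Q v * g = g * ι Q w) :
    Commute (ι Q v) (g * reverse g) := by
  have h' : reverse g * ι Q v = ι Q w * reverse g := by
    simpa only [reverse.map_mul, reverse_ι] using congrArg reverse h
  rw [Commute, SemiconjBy, ← mul_assoc, h, mul_assoc, mul_assoc, h']

theorem mul_mul_reverse_mul {g h : CliffordAlgebra Q} {β : R}
    (hh : h * reverse h = algebraMap R _ β) :
    g * h * reverse (g * h) = algebraMap R _ β * (g * reverse g) := by
  rw [reverse.map_mul, mul_assoc, ← mul_assoc h, hh, ← mul_assoc, ← Algebra.commutes,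
    mul_assoc]

end CommRing

theorem mem_bot_of_involute_eq_of_commute_ι {K V : Type*} [Field K] [AddCommGroup V]
    [Module K V] [FiniteDimensional K V] {Q : QuadraticForm K V}
    (hQ : (QuadraticMap.polarBilin Q).Nondegenerate) {x : CliffordAlgebra Q}
    (hinv : involute x = x) (hcomm : ∀ v, Commute (ι Q v) x) : x ∈ (⊥ : Subalgebra K _) := by
  refine mem_bot_of_forall_contractLeft_eq_zero fun d => ?_
  obtain ⟨v, rfl⟩ := (LinearMap.BilinForm.toDual _ hQ).surjective d
  have hd : LinearMap.BilinForm.toDual _ hQ v = QuadraticMap.polarBilin Q v :=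
    LinearMap.ext fun _ => LinearMap.BilinForm.toDual_def hQ
  rw [hd, ← ι_mul_sub_involute_mul_ι, hinv, (hcomm v).eq, sub_self]

end CliffordAlgebra

open CliffordAlgebra in
/-- Let `q` be a nondegenerate quadratic form on an `F`-vector space `V` and
`Γ⁺(V, q) = {g ∈ C₀(V, q)ˣ | g·V·g⁻¹ = V}` the even Clifford group.  Then the spinor norm
`Sn(g) = g·τ(g)`, where `τ` is the canonical involution (reversal) on the even Clifford
algebra, takes values in `Fˣ` and is a group homomorphism: `Sn(gh) = Sn(g)·Sn(h)`. -/
theorem spinor_norm_hom (F V : Type*) [Field F] [AddCommGroup V] [Module F V]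
    [FiniteDimensional F V]
    (q : QuadraticForm F V)
    (hq : (QuadraticMap.polarBilin q).Nondegenerate) :
    (∀ g : (CliffordAlgebra q)ˣ,
        (g : CliffordAlgebra q) ∈ even q →
        (∀ v : V, (g : CliffordAlgebra q) * ι q v * ((g⁻¹ : (CliffordAlgebra q)ˣ) : CliffordAlgebra q) ∈ LinearMap.range (ι q)) →
        (∀ v : V, ∃ w : V, ι q v = (g : CliffordAlgebra q) * ι q w * ((g⁻¹ : (CliffordAlgebra q)ˣ) : CliffordAlgebra q)) →
        ∃ α : Fˣ, (g : CliffordAlgebra q) * reverse (g : CliffordAlgebra q)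
          = algebraMap F (CliffordAlgebra q) (α : F)) ∧
    (∀ g h : (CliffordAlgebra q)ˣ,
        (g : CliffordAlgebra q) ∈ even q →
        (∀ v : V, (g : CliffordAlgebra q) * ι q v * ((g⁻¹ : (CliffordAlgebra q)ˣ) : CliffordAlgebra q) ∈ LinearMap.range (ι q)) →
        (∀ v : V, ∃ w : V, ι q v = (g : CliffordAlgebra q) * ι q w * ((g⁻¹ : (CliffordAlgebra q)ˣ) : CliffordAlgebra q)) →
        (h : CliffordAlgebra q) ∈ even q →
        (∀ v : V, (h : CliffordAlgebra q) * ι q v * ((h⁻¹ : (CliffordAlgebra q)ˣ) : CliffordAlgebra q) ∈ LinearMap.range (ι q)) →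
        (∀ v : V, ∃ w : V, ι q v = (h : CliffordAlgebra q) * ι q w * ((h⁻¹ : (CliffordAlgebra q)ˣ) : CliffordAlgebra q)) →
        ∀ α β : F,
          (g : CliffordAlgebra q) * reverse (g : CliffordAlgebra q)
            = algebraMap F (CliffordAlgebra q) α →
          (h : CliffordAlgebra q) * reverse (h : CliffordAlgebra q)
            = algebraMap F (CliffordAlgebra q) β →
          ((g * h : (CliffordAlgebra q)ˣ) : CliffordAlgebra q) *
              reverse ((g * h : (CliffordAlgebra q)ˣ) : CliffordAlgebra q)
            = algebraMap F (CliffordAlgebra q) (α * β)) := by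
  refine ⟨fun g hg _ hconj => ?_, fun g h _ _ _ _ _ _ α β hα hβ => ?_⟩
  · set x : CliffordAlgebra q := g * reverse (g : CliffordAlgebra q)
    have hcomm : ∀ v, Commute (ι q v) x := fun v => by
      obtain ⟨w, hw⟩ := hconj v
      exact commute_ι_mul_reverse (w := w) (by rw [hw, Units.inv_mul_cancel_right])
    have hx : x ∈ even q := mul_mem hg (reverse_mem_even_iff.mpr hg)
    have hinv : involute x = x := involute_eq_of_mem_even (by rwa [← even_toSubmodule])
    obtain ⟨r, hr⟩ := Algebra.mem_bot.mp (mem_bot_of_involute_eq_of_commute_ι hq hinv hcomm)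
    have := nontrivial_of_free (Q := q)
    have hr0 : r ≠ 0 := by
      rintro rfl
      exact (isUnit_mul_reverse g).ne_zero (hr.symm.trans (map_zero _))
    exact ⟨Units.mk0 r hr0, hr.symm⟩
  · rw [Units.val_mul, mul_mul_reverse_mul hβ, hα, ← map_mul, mul_comm]
end
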